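/- arXiv:1603.05010 — 4 statements merged into one kernel-verified Lean document; each statement's English description precedes it below -/
import Mathlib

section
/- Let A be a nonzero antisymmetric tensor of order d ≥ 3 with n = d+1 (i.e., A ∈ ℝ^{(d+1)×⋯×(d+1)}). Then the rank of the first matricization A_(1) is at most d; explicitly, with α_k := A(1,…,k−1,k+1,…,d+1), the linear combination Σ_{k=1}^{d+1} (−1)^k α_k · (row k of A_(1)) equals zero. -/
/-!
An antisymmetric `A` of order `d` in dimension `d + 1` is determined by its values
`α_k = A (succAbove k)` on the increasing tuples, so it expands against the Levi-Civita
symbol `ε` of order `d + 1` as `A i = ∑ k, (-1)^k α_k ε(k, i)`. Substituting this into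
`∑ k, (-1)^k α_k A(k, j)` pairs the symmetric coefficients `(-1)^(k+m) α_k α_m` with
`ε(m, k, j)`, which is antisymmetric in `(m, k)`, so the sum vanishes. The coefficients are
not all zero when `A ≠ 0`, so the rows of the first matricization are dependent.
-/

def IsAntisym {n d : ℕ} (A : (Fin d → Fin n) → ℝ) : Prop :=
  ∀ (π : Equiv.Perm (Fin d)) (i : Fin d → Fin n),
    A (i ∘ π) = ((Equiv.Perm.sign π : ℤ) : ℝ) * A i

open Equiv Finset Matrix

noncomputable def leviCivita {n : ℕ} (f : Fin n → Fin n) : ℝ :=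
  (Pi.basisFun ℝ (Fin n)).det (Pi.basisFun ℝ (Fin n) ∘ f)

lemma leviCivita_comp_perm {n : ℕ} (f : Fin n → Fin n) (σ : Perm (Fin n)) :
    leviCivita (f ∘ σ) = (Perm.sign σ : ℤ) * leviCivita f := by
  rw [leviCivita, ← Function.comp_assoc, AlternatingMap.map_perm, Units.smul_def, zsmul_eq_mul]
  rfl

lemma leviCivita_perm {n : ℕ} (σ : Perm (Fin n)) : leviCivita σ = Perm.sign σ := by
  have hid : leviCivita (id : Fin n → Fin n) = 1 := (Pi.basisFun ℝ (Fin n)).det_self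
  simpa [hid] using leviCivita_comp_perm id σ

lemma leviCivita_eq_zero_of_not_injective {n : ℕ} {f : Fin n → Fin n}
    (hf : ¬ Function.Injective f) : leviCivita f = 0 :=
  AlternatingMap.map_eq_zero_of_not_injective _ _ fun h =>
    hf (((Pi.basisFun ℝ (Fin n)).injective.of_comp_iff _).1 h)

lemma leviCivita_cons_succAbove_self {n : ℕ} (m : Fin (n + 1)) :
    leviCivita (Fin.cons m m.succAbove) = (-1) ^ (m : ℕ) := by
  have h : (Fin.cons m m.succAbove : Fin (n + 1) → Fin (n + 1)) = m.cycleRange.symm :=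
    Fin.cons_removeNth_eq_comp_cycleRange_symm id m
  rw [h, leviCivita_perm, Perm.sign_symm, Fin.sign_cycleRange]
  simp

lemma leviCivita_cons_succAbove_of_ne {n : ℕ} {k m : Fin (n + 1)} (h : k ≠ m) :
    leviCivita (Fin.cons k m.succAbove) = 0 := by
  obtain ⟨z, hz⟩ := Fin.exists_succAbove_eq h
  refine leviCivita_eq_zero_of_not_injective fun hinj => Fin.succ_ne_zero z (hinj ?_)
  simp [hz]

lemma leviCivita_cons_comp_perm {n : ℕ} (k : Fin (n + 1)) (i : Fin n → Fin (n + 1))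
    (π : Perm (Fin n)) :
    leviCivita (Fin.cons k (i ∘ π)) = (Perm.sign π : ℤ) * leviCivita (Fin.cons k i) := by
  have h : (Fin.cons k (i ∘ π) : Fin (n + 1) → Fin (n + 1)) =
      Fin.cons k i ∘ Perm.decomposeFin.symm (0, π) := by
    funext x
    rcases Fin.eq_zero_or_eq_succ x with rfl | ⟨y, rfl⟩ <;> simp
  rw [h, leviCivita_comp_perm]
  simp

lemma leviCivita_cons_swap {n : ℕ} (a b : Fin (n + 2)) (j : Fin n → Fin (n + 2)) :
    leviCivita (Fin.cons a (Fin.cons b j)) = -leviCivita (Fin.cons b (Fin.cons a j)) := by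
  have h : (Fin.cons a (Fin.cons b j) : Fin (n + 2) → Fin (n + 2)) =
      Fin.cons b (Fin.cons a j) ∘ swap 0 1 := by
    funext x
    rcases Fin.eq_zero_or_eq_succ x with rfl | ⟨y, rfl⟩
    · simp
    rcases Fin.eq_zero_or_eq_succ y with rfl | ⟨z, rfl⟩
    · simp
    · have hz1 : z.succ.succ ≠ 1 := by simp [Fin.ext_iff]
      rw [Function.comp_apply, swap_apply_of_ne_of_ne (Fin.succ_ne_zero _) hz1]
      simp
  rw [h, leviCivita, ← Function.comp_assoc, AlternatingMap.map_swap _ _ zero_ne_one]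
  rfl

lemma Fin.exists_succAbove_comp_perm_of_injective {d : ℕ} {i : Fin d → Fin (d + 1)}
    (hi : Function.Injective i) :
    ∃ (m : Fin (d + 1)) (π : Perm (Fin d)), i = m.succAbove ∘ π := by
  obtain ⟨m, hm⟩ : ∃ m, m ∉ Set.range i := by
    by_contra! h
    simpa using Fintype.card_le_of_surjective i fun m => h m
  choose g hg using fun a => Fin.exists_succAbove_eq fun h : i a = m => hm ⟨a, h⟩
  have hg_inj : Function.Injective g := fun a b h => hi (by rw [← hg a, ← hg b, h])
  exact ⟨m, Equiv.ofBijective g (Finite.injective_iff_bijective.1 hg_inj),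
    funext fun a => (hg a).symm⟩

lemma isAntisym_sum_mul_leviCivita_cons {d : ℕ} (c : Fin (d + 1) → ℝ) :
    IsAntisym fun i : Fin d → Fin (d + 1) => ∑ k, c k * leviCivita (Fin.cons k i) := by
  intro π i
  simp only [leviCivita_cons_comp_perm, mul_sum]
  exact sum_congr rfl fun _ _ => by ring

namespace IsAntisym

lemma apply_eq_zero_of_not_injective {n d : ℕ} {A : (Fin d → Fin n) → ℝ} (hA : IsAntisym A)
    {i : Fin d → Fin n} (hi : ¬ Function.Injective i) : A i = 0 := by
  obtain ⟨a, b, hab, hne⟩ := Function.not_injective_iff.1 hi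
  have hswap : i ∘ swap a b = i := by
    funext x
    rcases eq_or_ne x a with rfl | hxa
    · simp [hab]
    rcases eq_or_ne x b with rfl | hxb
    · simp [hab]
    · simp [swap_apply_of_ne_of_ne hxa hxb]
  have h := hA (swap a b) i
  rw [hswap, Perm.sign_swap hne] at h
  norm_num at h
  linarith

lemma ext_succAbove {d : ℕ} {A B : (Fin d → Fin (d + 1)) → ℝ} (hA : IsAntisym A)
    (hB : IsAntisym B) (h : ∀ m : Fin (d + 1), A m.succAbove = B m.succAbove) : A = B := by
  funext i
  by_cases hi : Function.Injective i
  · obtain ⟨m, π, rfl⟩ := Fin.exists_succAbove_comp_perm_of_injective hi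
    rw [hA, hB, h]
  · rw [apply_eq_zero_of_not_injective hA hi, apply_eq_zero_of_not_injective hB hi]

theorem eq_sum_mul_leviCivita_cons {d : ℕ} {A : (Fin d → Fin (d + 1)) → ℝ}
    (hA : IsAntisym A) (i : Fin d → Fin (d + 1)) :
    A i = ∑ k : Fin (d + 1), (-1) ^ (k : ℕ) * A k.succAbove * leviCivita (Fin.cons k i) := by
  refine congrFun (ext_succAbove hA (isAntisym_sum_mul_leviCivita_cons _) fun m => ?_) i
  rw [sum_eq_single m (fun k _ hk => by rw [leviCivita_cons_succAbove_of_ne hk, mul_zero])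
    (by simp), leviCivita_cons_succAbove_self, mul_right_comm, ← pow_add, ← two_mul, pow_mul]
  simp

theorem sum_mul_apply_cons_eq_zero {d : ℕ} {A : (Fin (d + 1) → Fin (d + 2)) → ℝ}
    (hA : IsAntisym A) (j : Fin d → Fin (d + 2)) :
    ∑ k : Fin (d + 2), (-1) ^ (k : ℕ) * A k.succAbove * A (Fin.cons k j) = 0 := by
  set c : Fin (d + 2) → ℝ := fun k => (-1) ^ (k : ℕ) * A k.succAbove
  set S := ∑ k, ∑ m, c k * (c m * leviCivita (Fin.cons m (Fin.cons k j)))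
  have hS : ∑ k, c k * A (Fin.cons k j) = S := by
    simp only [S, c, eq_sum_mul_leviCivita_cons hA (Fin.cons _ j), mul_sum]
  have hS_neg : S = -S :=
    calc S = ∑ m, ∑ k, c k * (c m * leviCivita (Fin.cons m (Fin.cons k j))) := sum_comm
      _ = ∑ m, ∑ k, -(c m * (c k * leviCivita (Fin.cons k (Fin.cons m j)))) :=
        sum_congr rfl fun m _ => sum_congr rfl fun k _ => by rw [leviCivita_cons_swap]; ring
      _ = -S := by simp only [S, sum_neg_distrib]
  change ∑ k, c k * A (Fin.cons k j) = 0
  linarith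

end IsAntisym

lemma Matrix.rank_lt_card_of_vecMul_eq_zero {m n K : Type*} [Fintype m] [Fintype n] [Field K]
    (M : Matrix m n K) {c : m → K} (hc : c ≠ 0) (h : c ᵥ* M = 0) :
    M.rank < Fintype.card m := by
  have hdep : ¬ LinearIndependent K M.row := by
    rw [Fintype.not_linearIndependent_iff]
    refine ⟨c, ?_, Function.ne_iff.1 hc⟩
    rw [← h, vecMul_eq_sum]
    rfl
  rw [linearIndependent_iff_card_eq_finrank_span] at hdep
  rw [rank_eq_finrank_span_row]
  exact lt_of_le_of_ne (finrank_range_le_card _) (Ne.symm hdep)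

theorem antisym_rank_le_of_dim_eq_order_succ_general {d₀ : ℕ}
    (A : (Fin (d₀ + 1) → Fin (d₀ + 2)) → ℝ) (hA : IsAntisym A) (hA0 : A ≠ 0) :
    (∀ j : Fin d₀ → Fin (d₀ + 2),
      ∑ k : Fin (d₀ + 2), (-1 : ℝ) ^ (k : ℕ) * A (Fin.succAbove k) *
        A (Fin.cons k j) = 0) ∧
    (Matrix.rank (Matrix.of fun (k : Fin (d₀ + 2)) (j : Fin d₀ → Fin (d₀ + 2)) =>
      A (Fin.cons k j))) ≤ d₀ + 1 := by
  have hrel := IsAntisym.sum_mul_apply_cons_eq_zero hA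
  refine ⟨hrel, ?_⟩
  have hc : (fun k : Fin (d₀ + 2) => (-1 : ℝ) ^ (k : ℕ) * A k.succAbove) ≠ 0 := by
    intro hc
    refine hA0 (funext fun i => ?_)
    simp [IsAntisym.eq_sum_mul_leviCivita_cons hA i, congrFun hc]
  have hrank := Matrix.rank_lt_card_of_vecMul_eq_zero
    (Matrix.of fun k (j : Fin d₀ → Fin (d₀ + 2)) => A (Fin.cons k j)) hc (funext hrel)
  rw [Fintype.card_fin] at hrank
  omega

/-- For a nonzero antisymmetric tensor of order `d = d₀+1 ≥ 3` in dimension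
`n = d+1 = d₀+2`, the rows of the first matricization satisfy the explicit
linear dependence `Σ_k (-1)^k α_k · (row k) = 0`, where `α_k` is the entry of
`A` at the increasing index tuple omitting `k`; consequently the first
matricization has rank at most `d`. -/
theorem antisym_rank_le_of_dim_eq_order_succ {d₀ : ℕ} (hd : 2 ≤ d₀)
    (A : (Fin (d₀ + 1) → Fin (d₀ + 2)) → ℝ) (hA : IsAntisym A) (hA0 : A ≠ 0) :
    (∀ j : Fin d₀ → Fin (d₀ + 2),
      ∑ k : Fin (d₀ + 2), (-1 : ℝ) ^ (k : ℕ) * A (Fin.succAbove k) *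
        A (Fin.cons k j) = 0) ∧
    (Matrix.rank (Matrix.of fun (k : Fin (d₀ + 2)) (j : Fin d₀ → Fin (d₀ + 2)) =>
      A (Fin.cons k j))) ≤ d₀ + 1 :=
  antisym_rank_le_of_dim_eq_order_succ_general A hA hA0
end

section
/- For every n ≥ d+2 ≥ 5 there exists an antisymmetric tensor A of order d with A ∈ ℝ^{n×⋯×n} whose first matricization A_(1) has rank n (i.e., full multilinear rank n is attained). -/
open Function Matrix

namespace Matrix

theorem rank_eq_card_of_submatrix_eq_one {m ι R : Type*} [Fintype m] [Fintype ι] [DecidableEq m]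
    [CommSemiring R] [StrongRankCondition R] (M : Matrix m ι R) (c : m → ι)
    (h : M.submatrix id c = 1) : M.rank = Fintype.card m :=
  le_antisymm M.rank_le_card_height <| by
    rw [← rank_one (R := R), ← h]
    exact M.rank_submatrix_le id c

end Matrix

section IndicatorMatrix

variable {ι κ α R : Type*} [Fintype ι] [DecidableEq ι] [Fintype κ] [DecidableEq α] [CommRing R]

def indicatorMatrix (R : Type*) [Zero R] [One R] (i j : ι → α) : Matrix ι ι R :=
  of fun p q => if i p = j q then 1 else 0

theorem det_indicatorMatrix_comp_perm (π : Equiv.Perm ι) (i j : ι → α) :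
    (indicatorMatrix R (i ∘ π) j).det = Equiv.Perm.sign π * (indicatorMatrix R i j).det :=
  det_permute π (indicatorMatrix R i j)

theorem det_indicatorMatrix_self {j : ι → α} (hj : Injective j) :
    (indicatorMatrix R j j).det = 1 := by
  have : indicatorMatrix R j j = 1 := by
    ext p q
    simp [indicatorMatrix, one_apply, hj.eq_iff]
  rw [this, det_one]

theorem injective_and_range_subset_of_det_indicatorMatrix_ne_zero {i j : ι → α}
    (h : (indicatorMatrix R i j).det ≠ 0) : Injective i ∧ Set.range i ⊆ Set.range j := by
  refine ⟨fun p p' hpp' => ?_, ?_⟩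
  · by_contra hne
    exact h (det_zero_of_row_eq hne (by ext q; simp [indicatorMatrix, hpp']))
  · rintro _ ⟨p, rfl⟩
    by_contra hp
    refine h (det_eq_zero_of_row_eq_zero p fun q => ?_)
    simp only [indicatorMatrix, of_apply, ite_eq_right_iff]
    exact fun hpq => absurd ⟨q, hpq.symm⟩ hp

/-- Up to the factor `(card ι)!`, the antisymmetrization of `∑ k, 𝟙_{s k}`: expanding the
determinant gives `∑ k, ∑ σ, sign σ * [i = s k ∘ σ]`. -/
def antisymmIndicator (R : Type*) [CommRing R] (s : κ → ι → α) (i : ι → α) : R :=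
  ∑ k, (indicatorMatrix R i (s k)).det

theorem antisymmIndicator_comp_perm (s : κ → ι → α) (π : Equiv.Perm ι) (i : ι → α) :
    antisymmIndicator R s (i ∘ π) = Equiv.Perm.sign π * antisymmIndicator R s i := by
  simp only [antisymmIndicator, Finset.mul_sum, det_indicatorMatrix_comp_perm]

theorem antisymmIndicator_eq_zero {s : κ → ι → α} {i : ι → α}
    (h : ∀ m, Injective i → ¬ Set.range i ⊆ Set.range (s m)) : antisymmIndicator R s i = 0 :=
  Finset.sum_eq_zero fun m _ => by
    by_contra hm
    obtain ⟨hi, hsub⟩ := injective_and_range_subset_of_det_indicatorMatrix_ne_zero hm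
    exact h m hi hsub

theorem antisymmIndicator_self {s : κ → ι → α} {k : κ} (hk : Injective (s k))
    (h : ∀ m ≠ k, ¬ Set.range (s k) ⊆ Set.range (s m)) : antisymmIndicator R s (s k) = 1 := by
  rw [antisymmIndicator, Finset.sum_eq_single k, det_indicatorMatrix_self hk]
  · intro m _ hmk
    by_contra hm
    exact h m hmk (injective_and_range_subset_of_det_indicatorMatrix_ne_zero hm).2
  · exact fun hk' => absurd (Finset.mem_univ k) hk'

end IndicatorMatrix

namespace GapTuple

variable {n d : ℕ}

def tail (d : ℕ) (k : Fin n) : Fin d → Fin n :=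
  fun q => ⟨(k + q + 2) % n, Nat.mod_lt _ k.pos⟩

def tuple (d : ℕ) (k : Fin n) : Fin (d + 1) → Fin n :=
  Fin.cons k (tail d k)

theorem tail_val (hn : d + 2 ≤ n) (k : Fin n) (q : Fin d) :
    (tail d k q : ℕ) = if (k : ℕ) + q + 2 < n then (k : ℕ) + q + 2 else (k : ℕ) + q + 2 - n := by
  have hk := k.isLt
  have hq := q.isLt
  split_ifs with h
  · exact Nat.mod_eq_of_lt h
  · exact (Nat.mod_eq_sub_mod (by omega)).trans (Nat.mod_eq_of_lt (by omega))

theorem tuple_injective (hn : d + 2 ≤ n) (k : Fin n) : Injective (tuple d k) := by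
  have hk := k.isLt
  refine Fin.cons_injective_iff.mpr ⟨?_, fun q q' hqq' => Fin.ext ?_⟩
  · rintro ⟨q, hq⟩
    have hval := congrArg Fin.val hq
    have hq := q.isLt
    rw [tail_val hn] at hval
    split_ifs at hval <;> omega
  · have hval := congrArg Fin.val hqq'
    have hq := q.isLt
    have hq' := q'.isLt
    rw [tail_val hn, tail_val hn] at hval
    split_ifs at hval <;> omega

/-- Write `m ≡ k + t` with `0 < t < n`. The entry `k + r` of `tail d k` lies in `tuple d m` iff
`r - t ≡ o (mod n)` for an offset `o ∈ {0, 2, …, d + 1}`, and `r = t + 1`, `r = 2` or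
`r = t + d + 2 - n` (according as `t ≤ d`, `t ≤ n - d - 1` or neither) avoids this. -/
theorem eq_of_range_tail_subset (hd : 2 ≤ d) (hn : d + 3 ≤ n) {k m : Fin n}
    (h : Set.range (tail d k) ⊆ Set.range (tuple d m)) : m = k := by
  by_contra hmk
  have hk := k.isLt
  have hm := m.isLt
  have hmk' : (m : ℕ) ≠ k := fun h => hmk (Fin.ext h)
  obtain ⟨t, ht⟩ : ∃ t : ℕ, t = if (k : ℕ) < m then (m - k : ℕ) else m + n - k := ⟨_, rfl⟩
  obtain ⟨w, hw⟩ : ∃ w : ℕ, w = if t ≤ d then t - 1 else if t ≤ n - d - 1 then 0 else t + d - n :=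
    ⟨_, rfl⟩
  have hwd : w < d := by split_ifs at ht hw <;> omega
  obtain ⟨q₀, hq₀⟩ : ∃ q₀ : Fin d, (q₀ : ℕ) = w := ⟨⟨w, hwd⟩, rfl⟩
  obtain ⟨o, ho⟩ := h ⟨q₀, rfl⟩
  have hval := congrArg Fin.val ho
  rw [tail_val (by omega)] at hval
  induction o using Fin.cases with
  | zero =>
    rw [tuple, Fin.cons_zero] at hval
    split_ifs at ht hw hval <;> omega
  | succ q =>
    have hq := q.isLt
    rw [tuple, Fin.cons_succ, tail_val (by omega)] at hval
    split_ifs at ht hw hval <;> omega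

theorem antisymmIndicator_tuple_cons (hd : 2 ≤ d) (hn : d + 3 ≤ n) (k' k : Fin n) :
    antisymmIndicator ℝ (tuple d) (Fin.cons k' (tail d k)) = if k' = k then 1 else 0 := by
  have hinj := tuple_injective (n := n) (d := d) (by omega)
  split_ifs with hk'
  · subst hk'
    exact antisymmIndicator_self (hinj k') fun m hm hsub =>
      hm (eq_of_range_tail_subset hd hn ((Set.range_comp_subset_range Fin.succ _).trans hsub))
  · refine antisymmIndicator_eq_zero fun m hi hsub => ?_
    have hm : m = k := eq_of_range_tail_subset hd hn
      ((Set.range_comp_subset_range Fin.succ _).trans hsub)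
    subst hm
    obtain ⟨p, hp⟩ := hsub ⟨0, rfl⟩
    induction p using Fin.cases with
    | zero => exact hk' hp.symm
    | succ q => exact Fin.succ_ne_zero q (hi (hp.symm.trans rfl)).symm

end GapTuple

open GapTuple in
/-- For every `n ≥ d + 2` with `d = d₀ + 1 ≥ 3`, there exists an antisymmetric
tensor of order `d` in dimension `n` whose first matricization has full rank `n`. -/
theorem exists_antisym_full_multilinear_rank {d₀ n : ℕ} (hd : 2 ≤ d₀)
    (hn : d₀ + 3 ≤ n) :
    ∃ A : (Fin (d₀ + 1) → Fin n) → ℝ, IsAntisym A ∧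
      (Matrix.rank (Matrix.of fun (k : Fin n) (j : Fin d₀ → Fin n) =>
        A (Fin.cons k j))) = n := by
  refine ⟨antisymmIndicator ℝ (tuple d₀), fun π i => ?_, ?_⟩
  · rw [antisymmIndicator_comp_perm]
  · rw [rank_eq_card_of_submatrix_eq_one _ (tail d₀), Fintype.card_fin]
    ext k' k
    simp only [submatrix_apply, of_apply, id, one_apply, antisymmIndicator_tuple_cons hd hn]
end

section
/- Let A ∈ ℝ^{n×⋯×n} be antisymmetric of order d, let v_1,…,v_d be unit vectors, and write [v_1,…,v_d] = [u_1,…,u_d]R with R upper triangular and u_1,…,u_d orthonormal (QR decomposition). Then A ×_1 v_1ᵀ ⋯ ×_d v_dᵀ = r_{11}⋯r_{dd} · (A ×_1 u_1ᵀ ⋯ ×_d u_dᵀ). In particular, since |r_{μμ}| ≤ 1, |A ×_1 v_1ᵀ ⋯ ×_d v_dᵀ| ≤ |A ×_1 u_1ᵀ ⋯ ×_d u_dᵀ|. -/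
def contr {n d : ℕ} (A : (Fin d → Fin n) → ℝ) (v : Fin d → Fin n → ℝ) : ℝ :=
  ∑ i : Fin d → Fin n, A i * ∏ m : Fin d, v m (i m)

open Finset

section Contraction

variable {n d : ℕ} {A : (Fin d → Fin n) → ℝ}

theorem contr_comp_perm (hA : IsAntisym A) (v : Fin d → Fin n → ℝ) (σ : Equiv.Perm (Fin d)) :
    contr A (v ∘ σ) = ((Equiv.Perm.sign σ : ℤ) : ℝ) * contr A v := by
  unfold contr
  rw [← Equiv.sum_comp (σ.symm.arrowCongr (Equiv.refl (Fin n))), mul_sum]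
  refine sum_congr rfl fun j _ => ?_
  show A (j ∘ σ) * ∏ m, v (σ m) (j (σ m)) = _
  rw [hA σ j, Equiv.prod_comp σ fun m => v m (j m), mul_assoc]

theorem contr_eq_zero_of_eq (hA : IsAntisym A) (v : Fin d → Fin n → ℝ) {a b : Fin d}
    (hv : v a = v b) (hab : a ≠ b) : contr A v = 0 := by
  have hswap : v ∘ Equiv.swap a b = v := by
    funext m
    rcases eq_or_ne m a with rfl | hma
    · simp [hv]
    rcases eq_or_ne m b with rfl | hmb
    · simp [hv]
    · simp [Equiv.swap_apply_of_ne_of_ne hma hmb]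
  have h := contr_comp_perm hA v (Equiv.swap a b)
  rw [hswap, Equiv.Perm.sign_swap hab] at h
  push_cast at h
  linarith

variable (A) in
def contrMultilinear : MultilinearMap ℝ (fun _ : Fin d => Fin n → ℝ) ℝ :=
  ∑ i : Fin d → Fin n,
    A i • (MultilinearMap.mkPiAlgebra ℝ (Fin d) ℝ).compLinearMap fun m => LinearMap.proj (i m)

theorem contrMultilinear_apply (v : Fin d → Fin n → ℝ) : contrMultilinear A v = contr A v := by
  simp [contrMultilinear, contr]

def contrAlternating (hA : IsAntisym A) : (Fin n → ℝ) [⋀^Fin d]→ₗ[ℝ] ℝ :=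
  { contrMultilinear A with
    map_eq_zero_of_eq' := fun v a b hv hab => by
      simpa [contrMultilinear_apply] using contr_eq_zero_of_eq hA v hv hab }

theorem contrAlternating_apply (hA : IsAntisym A) (v : Fin d → Fin n → ℝ) :
    contrAlternating hA v = contr A v :=
  contrMultilinear_apply v

theorem contr_linearCombination_eq_det_mul (hA : IsAntisym A) (u : Fin d → Fin n → ℝ)
    (R : Matrix (Fin d) (Fin d) ℝ) :
    contr A (fun m x => ∑ p, R p m * u p x) = R.det * contr A u := by
  let L := Fintype.linearCombination ℝ u
  let f := (contrAlternating hA).compLinearMap L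
  have hcol : (fun m x => ∑ p, R p m * u p x) = fun m => L fun p => R p m := by
    ext m x
    simp [L, Fintype.linearCombination_apply, Finset.sum_apply]
  have hbasis : f (Pi.basisFun ℝ (Fin d)) = contr A u := by
    simp [f, L, contrAlternating_apply, Fintype.linearCombination_apply_single]
  calc contr A (fun m x => ∑ p, R p m * u p x)
      = f fun m p => R p m := by rw [hcol]; exact (contrAlternating_apply hA _).symm
    _ = R.det * contr A u := by
      rw [f.eq_smul_basis_det (Pi.basisFun ℝ (Fin d)), AlternatingMap.smul_apply,
        Pi.basisFun_det_apply, hbasis, smul_eq_mul, mul_comm]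
      exact congrArg (· * _) (Matrix.det_transpose R)

end Contraction

theorem sum_sq_linearCombination_of_orthonormal {ι κ : Type*} [Fintype ι] [Fintype κ]
    [DecidableEq ι] (u : ι → κ → ℝ) (hu : ∀ p q, ∑ x, u p x * u q x = if p = q then 1 else 0)
    (c : ι → ℝ) : ∑ x, (∑ p, c p * u p x) ^ 2 = ∑ p, c p ^ 2 := by
  calc ∑ x, (∑ p, c p * u p x) ^ 2
      = ∑ x, ∑ p, ∑ q, c p * c q * (u p x * u q x) := by
        refine sum_congr rfl fun x _ => ?_
        rw [sq, sum_mul_sum]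
        exact sum_congr rfl fun p _ => sum_congr rfl fun q _ => by ring
    _ = ∑ p, ∑ q, c p * c q * ∑ x, u p x * u q x := by
        simp only [mul_sum]
        rw [sum_comm]
        exact sum_congr rfl fun p _ => sum_comm
    _ = ∑ p, c p ^ 2 := by simp [hu, sq]

theorem abs_le_one_of_sum_sq_eq_one {ι : Type*} [Fintype ι] {c : ι → ℝ}
    (hc : ∑ p, c p ^ 2 = 1) (m : ι) : |c m| ≤ 1 := by
  rw [← sq_le_one_iff_abs_le_one, ← hc]
  exact single_le_sum (fun p _ => sq_nonneg (c p)) (mem_univ m)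

/-- If `[v₁,…,v_d] = [u₁,…,u_d] R` is a QR decomposition of unit vectors
`v_μ`, with `u₁,…,u_d` orthonormal and `R` upper triangular, then the full
contraction satisfies
`A ×₁ v₁ᵀ ⋯ ×_d v_dᵀ = r₁₁ ⋯ r_dd · (A ×₁ u₁ᵀ ⋯ ×_d u_dᵀ)`, and in
particular `|A ×₁ v₁ᵀ ⋯ ×_d v_dᵀ| ≤ |A ×₁ u₁ᵀ ⋯ ×_d u_dᵀ|`. -/
theorem antisym_contr_qr {n d : ℕ}
    (A : (Fin d → Fin n) → ℝ) (hA : IsAntisym A)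
    (v u : Fin d → Fin n → ℝ) (R : Matrix (Fin d) (Fin d) ℝ)
    (hv : ∀ m, ∑ x : Fin n, v m x ^ 2 = 1)
    (hu : ∀ p q : Fin d, ∑ x : Fin n, u p x * u q x = if p = q then 1 else 0)
    (hR : ∀ p q : Fin d, q < p → R p q = 0)
    (hvu : ∀ m x, v m x = ∑ p : Fin d, R p m * u p x) :
    contr A v = (∏ m : Fin d, R m m) * contr A u ∧
    |contr A v| ≤ |contr A u| := by
  have hv_eq : v = fun m x => ∑ p, R p m * u p x := funext fun m => funext (hvu m)
  have hdiag : contr A v = (∏ m, R m m) * contr A u := by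
    rw [hv_eq, contr_linearCombination_eq_det_mul hA u R,
      Matrix.det_of_isUpperTriangular fun p q hqp => hR p q hqp]
  have hcol_norm : ∀ m, ∑ p, R p m ^ 2 = 1 := fun m => by
    rw [← sum_sq_linearCombination_of_orthonormal u hu, ← hv m, hv_eq]
  have hdiag_le : ∀ m, |R m m| ≤ 1 := fun m => abs_le_one_of_sum_sq_eq_one (hcol_norm m) m
  refine ⟨hdiag, ?_⟩
  rw [hdiag, abs_mul, abs_prod]
  exact mul_le_of_le_one_left (abs_nonneg _)
    (prod_le_one (fun m _ => abs_nonneg _) fun m _ => hdiag_le m)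
end

section
/- Let u_1,u_2,u_3,u_4 ∈ ℝ^n be orthonormal, α ≠ 0, and A = antisymm(α u_1⊗u_2⊗u_3⊗u_4). Then for any permutation π of {1,2,3,4} with sign σ, the matrix A_(1,2) maps u_{π(1)}⊗u_{π(2)} − u_{π(2)}⊗u_{π(1)} to (σα/12)(u_{π(3)}⊗u_{π(4)} − u_{π(4)}⊗u_{π(3)}). Consequently A_(1,2) has eigenvalues α/12 and −α/12, each with a three-dimensional eigenspace, and all other eigenvalues are zero. -/
/-! Up to the factor `α / 24`, an entry `A i` is the determinant `det [u_m (i_k)]`. Reindexing the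
alternating sum by `π`, the image of `u_{π0} ∧ u_{π1}` only sees the four permutations `τ` with
`{τ 2, τ 3} = {0, 1}`, which gives the first claim. Expanding the determinant along its first two
rows writes `A_(1,2)` as `(α / 48) Σ ± e eᵀ` over the six vectors `e = u_a ∧ u_b ± u_c ∧ u_d`, one
pair for each perfect matching `{ab | cd}` of the four indices. These vectors are orthogonal of
squared norm `4`, so this is a spectral decomposition with eigenvalues `± α / 12`, three of each. -/

def mat12 {n : ℕ} (A : (Fin 4 → Fin n) → ℝ) :
    Matrix (Fin n × Fin n) (Fin n × Fin n) ℝ :=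
  fun p q => A ![p.1, p.2, q.1, q.2]

open Matrix Finset Equiv Module

section General

variable {ι κ m R : Type*}

def tensorVec [Mul R] (v w : m → R) : m × m → R := fun p => v p.1 * w p.2

def wedgeVec [Mul R] [Sub R] (v w : m → R) : m × m → R := tensorVec v w - tensorVec w v

theorem tensorVec_dotProduct_tensorVec [Fintype m] [CommSemiring R] (v w v' w' : m → R) :
    tensorVec v w ⬝ᵥ tensorVec v' w' = (v ⬝ᵥ v') * (w ⬝ᵥ w') := by
  simp only [dotProduct, tensorVec, Fintype.sum_prod_type, Finset.sum_mul_sum]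
  exact Finset.sum_congr rfl fun _ _ => Finset.sum_congr rfl fun _ _ => by ring

theorem tensorVec_dotProduct_wedgeVec [DecidableEq κ] [Fintype m] [CommRing R]
    {u : κ → m → R} (hu : ∀ a b, u a ⬝ᵥ u b = if a = b then 1 else 0) (a b c d : κ) :
    tensorVec (u a) (u b) ⬝ᵥ wedgeVec (u c) (u d) =
      (if a = c then 1 else 0) * (if b = d then 1 else 0) -
        (if a = d then 1 else 0) * (if b = c then 1 else 0) := by
  rw [wedgeVec, dotProduct_sub, tensorVec_dotProduct_tensorVec, tensorVec_dotProduct_tensorVec,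
    hu, hu, hu, hu]

theorem wedgeVec_dotProduct_wedgeVec [DecidableEq κ] [Fintype m] [CommRing R]
    {u : κ → m → R} (hu : ∀ a b, u a ⬝ᵥ u b = if a = b then 1 else 0) (a b c d : κ) :
    wedgeVec (u a) (u b) ⬝ᵥ wedgeVec (u c) (u d) =
      2 * ((if a = c then 1 else 0) * (if b = d then 1 else 0) -
        (if a = d then 1 else 0) * (if b = c then 1 else 0)) := by
  rw [wedgeVec, sub_dotProduct, tensorVec_dotProduct_wedgeVec hu, tensorVec_dotProduct_wedgeVec hu]
  ring

theorem Matrix.sum_smul_vecMulVec_mulVec [Fintype ι] [Fintype m] [CommSemiring R]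
    (c : ι → R) (a b : ι → m → R) (x : m → R) :
    (∑ i, c i • vecMulVec (a i) (b i)) *ᵥ x = ∑ i, (c i * (b i ⬝ᵥ x)) • a i := by
  simp only [sum_mulVec, smul_mulVec, vecMulVec_mulVec, op_smul_eq_smul, smul_smul]

theorem linearIndependent_of_dotProduct_eq_ite [Fintype ι] [DecidableEq ι] [Fintype m] [Field R]
    {b : ι → m → R} {r : R} (hb : ∀ i j, b i ⬝ᵥ b j = if i = j then r else 0) (hr : r ≠ 0) :
    LinearIndependent R b := by
  refine Fintype.linearIndependent_iff.2 fun g hg j => ?_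
  have h : (∑ i, g i • b i) ⬝ᵥ b j = g j * r := by
    simp [sum_dotProduct, hb]
  rw [hg, zero_dotProduct] at h
  exact (mul_eq_zero.1 h.symm).resolve_right hr

theorem Module.End.eigenspace_eq_span_of_range_le {V : Type*} [Fintype ι] [Field R]
    [AddCommGroup V] [Module R V] {T : End R V} {b : ι → V} (hb : LinearIndependent R b)
    {c : ι → R} (hTb : ∀ i, T (b i) = c i • b i)
    (hT : LinearMap.range T ≤ Submodule.span R (Set.range b)) {μ : R} (hμ : μ ≠ 0) :
    eigenspace T μ = Submodule.span R (Set.range fun i : {i // c i = μ} => b i) := by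
  apply le_antisymm
  · intro x hx
    rw [mem_eigenspace_iff] at hx
    have hxb : x ∈ Submodule.span R (Set.range b) := by
      have : x = μ⁻¹ • T x := by rw [hx, smul_smul, inv_mul_cancel₀ hμ, one_smul]
      rw [this]
      exact Submodule.smul_mem _ _ (hT (LinearMap.mem_range_self T x))
    obtain ⟨a, rfl⟩ := (Submodule.mem_span_range_iff_exists_fun R).1 hxb
    have hcoeff : ∀ i, a i * (c i - μ) = 0 := by
      refine Fintype.linearIndependent_iff.1 hb _ ?_
      calc ∑ i, (a i * (c i - μ)) • b i = T (∑ i, a i • b i) - μ • ∑ i, a i • b i := by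
            simp only [map_sum, map_smul, hTb, Finset.smul_sum, smul_smul, ← Finset.sum_sub_distrib,
              mul_sub, sub_smul, mul_comm]
        _ = 0 := by rw [hx, sub_self]
    refine Submodule.sum_mem _ fun i _ => ?_
    by_cases hi : c i = μ
    · exact Submodule.smul_mem _ _ (Submodule.subset_span ⟨⟨i, hi⟩, rfl⟩)
    · rw [(mul_eq_zero.1 (hcoeff i)).resolve_right (sub_ne_zero.2 hi), zero_smul]
      exact Submodule.zero_mem _
  · rw [Submodule.span_le]
    rintro _ ⟨⟨i, hi⟩, rfl⟩
    exact mem_eigenspace_iff.2 (hi ▸ hTb i)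

theorem finrank_eigenspace_sum_smul_vecMulVec [Fintype ι] [DecidableEq ι] [Fintype m]
    [DecidableEq m] [Field R] (c : ι → R) {b : ι → m → R} {r : R}
    (hb : ∀ i j, b i ⬝ᵥ b j = if i = j then r else 0) (hr : r ≠ 0) {μ : R} (hμ : μ ≠ 0) :
    finrank R (End.eigenspace (toLin' (∑ i, c i • vecMulVec (b i) (b i))) μ) =
      Nat.card {i // c i * r = μ} := by
  have hli := linearIndependent_of_dotProduct_eq_ite hb hr
  have hTb : ∀ j, toLin' (∑ i, c i • vecMulVec (b i) (b i)) (b j) = (c j * r) • b j := by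
    intro j
    rw [toLin'_apply, Matrix.sum_smul_vecMulVec_mulVec]
    simp [hb]
  have hT : LinearMap.range (toLin' (∑ i, c i • vecMulVec (b i) (b i))) ≤
      Submodule.span R (Set.range b) := by
    rintro _ ⟨x, rfl⟩
    rw [toLin'_apply, Matrix.sum_smul_vecMulVec_mulVec]
    exact Submodule.sum_mem _ fun i _ => Submodule.smul_mem _ _ (Submodule.subset_span ⟨i, rfl⟩)
  classical
  rw [End.eigenspace_eq_span_of_range_le hli hTb hT hμ, Nat.card_eq_fintype_card]
  exact finrank_span_eq_card (hli.comp _ Subtype.val_injective)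

end General

theorem Fin.sum_perm_four_sign_smul {R V : Type*} [CommRing R] [AddCommGroup V] [Module R V]
    (f : Fin 4 → Fin 4 → V) :
    ∑ τ : Perm (Fin 4), (((Perm.sign τ : ℤ) : R) *
      ((if τ 2 = 0 then 1 else 0) * (if τ 3 = 1 then 1 else 0) -
        (if τ 2 = 1 then 1 else 0) * (if τ 3 = 0 then 1 else 0))) • f (τ 0) (τ 1) =
      (2 : R) • (f 2 3 - f 3 2) := by
  set g : Perm (Fin 4) → ℤ := fun τ => Perm.sign τ *
      ((if τ 2 = 0 then 1 else 0) * (if τ 3 = 1 then 1 else 0) -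
        (if τ 2 = 1 then 1 else 0) * (if τ 3 = 0 then 1 else 0))
  have hfiber : ∀ a b : Fin 4, ∑ τ with (τ 0, τ 1) = (a, b), g τ =
      if a = 2 ∧ b = 3 then 2 else if a = 3 ∧ b = 2 then -2 else 0 := by
    simp only [Prod.mk.injEq, g]
    decide
  calc _ = ∑ τ : Perm (Fin 4), g τ • f (τ 0) (τ 1) := by
        refine Finset.sum_congr rfl fun τ _ => ?_
        rw [← Int.cast_smul_eq_zsmul R]
        push_cast [g]
        split_ifs <;> simp
    _ = ∑ p : Fin 4 × Fin 4, (∑ τ with (τ 0, τ 1) = p, g τ) • f p.1 p.2 := by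
        rw [← Finset.sum_fiberwise _ (fun τ : Perm (Fin 4) => (τ 0, τ 1))]
        refine Finset.sum_congr rfl fun p _ => ?_
        rw [Finset.sum_smul]
        refine Finset.sum_congr rfl fun τ hτ => ?_
        rw [← (Finset.mem_filter.1 hτ).2]
    _ = _ := by
        simp only [Fintype.sum_prod_type, hfiber, Fin.sum_univ_four, Fin.isValue, Fin.reduceEq,
          and_true, and_false, ↓reduceIte, zero_smul, add_zero, zero_add, neg_smul]
        module

/-- `u_a ∧ u_b ± u_c ∧ u_d` for the three perfect matchings `{ab | cd}` of `Fin 4`, ordered so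
that `matchingSign` is the resulting eigenvalue sign. -/
def matchingVec {m R : Type*} [CommRing R] (u : Fin 4 → m → R) : Fin 6 → m × m → R :=
  ![wedgeVec (u 0) (u 1) + wedgeVec (u 2) (u 3), wedgeVec (u 0) (u 3) + wedgeVec (u 1) (u 2),
    wedgeVec (u 0) (u 2) - wedgeVec (u 1) (u 3), wedgeVec (u 0) (u 1) - wedgeVec (u 2) (u 3),
    wedgeVec (u 0) (u 3) - wedgeVec (u 1) (u 2), wedgeVec (u 0) (u 2) + wedgeVec (u 1) (u 3)]

def matchingSign : Fin 6 → ℤ := ![1, 1, 1, -1, -1, -1]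

theorem matchingSign_eq_one_or_eq_neg_one (i : Fin 6) :
    matchingSign i = 1 ∨ matchingSign i = -1 := by
  revert i; decide

theorem card_matchingSign_mul_eq {α μ : ℝ} (hα : α ≠ 0) {s : ℤ} (hμ : μ = s * α / 12) :
    Nat.card {i // (matchingSign i * α / 48 : ℝ) * 4 = μ} = Nat.card {i // matchingSign i = s} :=
  Nat.card_congr <| Equiv.subtypeEquivRight fun i => by
    rw [hμ, show (matchingSign i * α / 48 : ℝ) * 4 = matchingSign i * (α / 12) by ring,
      mul_div_assoc, mul_left_inj' (div_ne_zero hα (by norm_num)), Int.cast_inj]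

theorem matchingVec_dotProduct_matchingVec {m R : Type*} [Fintype m] [CommRing R]
    {u : Fin 4 → m → R} (hu : ∀ a b, u a ⬝ᵥ u b = if a = b then 1 else 0) (i j : Fin 6) :
    matchingVec u i ⬝ᵥ matchingVec u j = if i = j then 4 else 0 := by
  fin_cases i <;> fin_cases j <;>
    simp [matchingVec, add_dotProduct, dotProduct_add, sub_dotProduct, dotProduct_sub,
      wedgeVec_dotProduct_wedgeVec hu] <;> norm_num

noncomputable def antisymmRankOne {n : ℕ} (α : ℝ) (u : Fin 4 → Fin n → ℝ) (i : Fin 4 → Fin n) : ℝ :=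
  (1 / 24 : ℝ) * ∑ π : Perm (Fin 4), ((Perm.sign π : ℤ) : ℝ) * (α * ∏ m : Fin 4, u m (i (π m)))

section AntisymmRankOne

variable {n : ℕ} {u : Fin 4 → Fin n → ℝ} {α : ℝ}

theorem mat12_antisymmRankOne_eq_sum_perm :
    mat12 (antisymmRankOne α u) = ∑ σ : Perm (Fin 4), (α / 24 * (Perm.sign σ : ℤ)) •
      vecMulVec (tensorVec (u (σ 0)) (u (σ 1))) (tensorVec (u (σ 2)) (u (σ 3))) := by
  ext p q
  rw [mat12, antisymmRankOne, Matrix.sum_apply, mul_sum,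
    ← Equiv.sum_comp (Equiv.inv (Perm (Fin 4)))]
  refine Finset.sum_congr rfl fun σ _ => ?_
  have hprod : ∏ m, u m (![p.1, p.2, q.1, q.2] (σ⁻¹ m)) =
      ∏ k, u (σ k) (![p.1, p.2, q.1, q.2] k) := by
    rw [← Equiv.prod_comp σ]
    simp
  simp only [Equiv.inv_apply, Perm.sign_inv, hprod, Fin.prod_univ_four, Matrix.smul_apply,
    vecMulVec_apply, tensorVec, smul_eq_mul, cons_val_zero, cons_val_one, Matrix.cons_val]
  ring

theorem mat12_antisymmRankOne_mulVec_wedgeVec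
    (hu : ∀ a b, u a ⬝ᵥ u b = if a = b then 1 else 0) (π : Perm (Fin 4)) :
    mat12 (antisymmRankOne α u) *ᵥ wedgeVec (u (π 0)) (u (π 1)) =
      ((Perm.sign π : ℤ) * α / 12 : ℝ) • wedgeVec (u (π 2)) (u (π 3)) := by
  rw [mat12_antisymmRankOne_eq_sum_perm, sum_smul_vecMulVec_mulVec,
    ← Equiv.sum_comp (Equiv.mulLeft π)]
  simp only [Equiv.coe_mulLeft, Perm.mul_apply, Perm.sign_mul, Units.val_mul, Int.cast_mul,
    tensorVec_dotProduct_wedgeVec hu, π.injective.eq_iff]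
  rw [show ((Perm.sign π : ℤ) * α / 12 : ℝ) • wedgeVec (u (π 2)) (u (π 3)) =
      (α / 24 * (Perm.sign π : ℤ)) • (2 : ℝ) •
        (tensorVec (u (π 2)) (u (π 3)) - tensorVec (u (π 3)) (u (π 2))) by
      rw [smul_smul, wedgeVec]; ring_nf,
    ← Fin.sum_perm_four_sign_smul fun a b => tensorVec (u (π a)) (u (π b)), Finset.smul_sum]
  refine Finset.sum_congr rfl fun τ _ => ?_
  rw [smul_smul]
  ring_nf

theorem mat12_antisymmRankOne_eq_sum_matchingVec :
    mat12 (antisymmRankOne α u) =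
      ∑ i, (matchingSign i * α / 48 : ℝ) • vecMulVec (matchingVec u i) (matchingVec u i) := by
  ext p q
  have hdet : antisymmRankOne α u ![p.1, p.2, q.1, q.2] =
      α / 24 * (of fun k m => u m (![p.1, p.2, q.1, q.2] k)).det := by
    rw [antisymmRankOne, det_apply', mul_sum, mul_sum]
    refine Finset.sum_congr rfl fun π _ => ?_
    simp only [of_apply]
    ring
  rw [mat12, hdet, det_succ_row_zero]
  simp [Fin.sum_univ_succ, det_fin_three, Fin.succAbove, matchingVec, matchingSign, wedgeVec,
    tensorVec, Matrix.sum_apply, vecMulVec_apply]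
  ring

end AntisymmRankOne

/-- For `A = antisymm(α u₁⊗u₂⊗u₃⊗u₄)` with `u₁,…,u₄` orthonormal and `α ≠ 0`,
the matricization `A_(1,2)` maps `u_{π(1)}⊗u_{π(2)} − u_{π(2)}⊗u_{π(1)}` to
`(σα/12)(u_{π(3)}⊗u_{π(4)} − u_{π(4)}⊗u_{π(3)})` for every permutation `π` of
sign `σ`; consequently `A_(1,2)` has eigenvalues `α/12` and `−α/12`, each with a
three-dimensional eigenspace, and all its other eigenvalues are zero. -/
theorem mat12_antisymm_rank_one_eigen {n : ℕ} (u : Fin 4 → Fin n → ℝ)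
    (hu : ∀ p q : Fin 4, ∑ x : Fin n, u p x * u q x = if p = q then 1 else 0)
    (α : ℝ) (hα : α ≠ 0) (A : (Fin 4 → Fin n) → ℝ)
    (hA : ∀ i, A i = (1 / 24 : ℝ) * ∑ π : Equiv.Perm (Fin 4),
        ((Equiv.Perm.sign π : ℤ) : ℝ) * (α * ∏ m : Fin 4, u m (i (π m)))) :
    (∀ π : Equiv.Perm (Fin 4),
      (mat12 A).mulVec
          (fun p => u (π 0) p.1 * u (π 1) p.2 - u (π 1) p.1 * u (π 0) p.2) =
        (((Equiv.Perm.sign π : ℤ) : ℝ) * α / 12) •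
          (fun q => u (π 2) q.1 * u (π 3) q.2 - u (π 3) q.1 * u (π 2) q.2)) ∧
    Module.finrank ℝ
      (Module.End.eigenspace (Matrix.toLin' (mat12 A)) (α / 12)) = 3 ∧
    Module.finrank ℝ
      (Module.End.eigenspace (Matrix.toLin' (mat12 A)) (-α / 12)) = 3 ∧
    (∀ μ : ℝ, μ ≠ α / 12 → μ ≠ -α / 12 → μ ≠ 0 →
      Module.End.eigenspace (Matrix.toLin' (mat12 A)) μ = ⊥) := by
  obtain rfl : A = antisymmRankOne α u := funext hA
  have hrank : ∀ μ ≠ 0, finrank ℝ (End.eigenspace (toLin' (mat12 (antisymmRankOne α u))) μ) =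
      Nat.card {i // (matchingSign i * α / 48 : ℝ) * 4 = μ} := fun μ hμ => by
    rw [mat12_antisymmRankOne_eq_sum_matchingVec]
    exact finrank_eigenspace_sum_smul_vecMulVec _ (matchingVec_dotProduct_matchingVec hu)
      four_ne_zero hμ
  refine ⟨mat12_antisymmRankOne_mulVec_wedgeVec hu, ?_, ?_, fun μ h₁ h₂ hμ => ?_⟩
  · rw [hrank _ (div_ne_zero hα (by norm_num)),
      card_matchingSign_mul_eq hα (s := 1) (by simp), Nat.card_eq_fintype_card]
    rfl
  · rw [hrank _ (div_ne_zero (neg_ne_zero.2 hα) (by norm_num)),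
      card_matchingSign_mul_eq hα (s := -1) (by push_cast; ring), Nat.card_eq_fintype_card]
    rfl
  · rw [← Submodule.finrank_eq_zero, hrank μ hμ, Nat.card_eq_zero]
    refine Or.inl ⟨fun ⟨i, hi⟩ => ?_⟩
    rcases matchingSign_eq_one_or_eq_neg_one i with h | h <;> rw [h] at hi <;> push_cast at hi
    · exact h₁ (by linarith)
    · exact h₂ (by linarith)
end
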